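/- Let F(x,y,z,t) = x³ + t·x·y^α + y^β·z + z^{3α} with 3α = 2β + 1, and let γ(s) = (x(s),y(s),z(s),t(s)) be an analytic arc in F⁻¹(0) through 0 along which condition (b^π) fails. Then the valuations ν along γ satisfy ν(x) > ν(y) = ν(z) > ν(t), ν(x) + ν(t) = ν(z) + (β - α)·ν(y), and 2ν(x) = ν(t) + α·ν(y); hence with m = ν(y), ν(x) = (β+1)m/3 and ν(t) = m/3. -/

import Mathlib

/-!
Write `a, b, c, d` for the orders of `x, y, z, t` and `e, f, g` for those of `F_x, F_y, F_z`.
Failure of `(b^π)` bounds each of `e, f, g` below by `d + a + αb - min(a, b, c)`. Comparing the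
two terms of `F_x = 3x² + ty^α` then gives `2a = d + αb`, hence `a > b` and `e > 2a`: the term
`x F_x` is negligible at order `3a`. Along the arc, where `F = 0`,
  `y^β z = 2x³ - z^{3α} - x F_x`,
  `z F_z = 2x³ + (3α - 1) z^{3α} - x F_x`,
  `y F_y = -x³ - β z^{3α} + (α - β) x F_x`   (this one uses `3α = 2β + 1`),
so `βb + c` and `c + g` both equal `3 min(a, αc)` once `a ≠ αc`, and `b + f = 3a` once `a < αc`.
The case `a = αc` is impossible: then `b < 2c`, and `y^β z` would be the only term of lowest
order in `2x³ = x F_x + y^β z + z^{3α}`. The lower bounds on `g` and `f` now force `a < αc`,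
`c ≤ b` and `b ≤ c`, and the stated values follow by linear arithmetic.
-/

/-- `f` has vanishing order exactly `k` at `0`: `f(s) = s^k·u(s)` with `u`
analytic at `0` and `u(0) ≠ 0`. -/
def HasVanishingOrder (f : ℂ → ℂ) (k : ℕ) : Prop :=
  ∃ u : ℂ → ℂ, AnalyticAt ℂ u 0 ∧ u 0 ≠ 0 ∧ ∀ᶠ s in nhds (0 : ℂ), f s = s ^ k * u s

open Filter Topology

namespace HasVanishingOrder

variable {f g : ℂ → ℂ} {k l : ℕ}

theorem analyticAt (hf : HasVanishingOrder f k) : AnalyticAt ℂ f 0 := by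
  obtain ⟨u, hu, -, hfu⟩ := hf
  exact ((analyticAt_id.pow k).mul hu).congr (EventuallyEq.symm hfu)

theorem analyticOrderAt_eq (hf : HasVanishingOrder f k) : analyticOrderAt f 0 = k := by
  obtain ⟨u, hu, hu0, hfu⟩ := id hf
  exact hf.analyticAt.analyticOrderAt_eq_natCast.mpr ⟨u, hu, hu0, by simpa using hfu⟩

theorem unique (hk : HasVanishingOrder f k) (hl : HasVanishingOrder f l) : k = l :=
  Nat.cast_injective (hk.analyticOrderAt_eq.symm.trans hl.analyticOrderAt_eq)

theorem congr (hf : HasVanishingOrder f k) (hfg : f =ᶠ[𝓝 0] g) : HasVanishingOrder g k := by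
  obtain ⟨u, hu, hu0, hfu⟩ := hf
  exact ⟨u, hu, hu0, hfg.symm.trans hfu⟩

theorem mul (hf : HasVanishingOrder f k) (hg : HasVanishingOrder g l) :
    HasVanishingOrder (fun s => f s * g s) (k + l) := by
  obtain ⟨u, hu, hu0, hfu⟩ := hf
  obtain ⟨v, hv, hv0, hgv⟩ := hg
  refine ⟨fun s => u s * v s, hu.mul hv, mul_ne_zero hu0 hv0, ?_⟩
  filter_upwards [hfu, hgv] with s hfs hgs
  rw [hfs, hgs]
  ring

theorem pow (hf : HasVanishingOrder f k) (n : ℕ) :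
    HasVanishingOrder (fun s => f s ^ n) (n * k) := by
  obtain ⟨u, hu, hu0, hfu⟩ := hf
  refine ⟨fun s => u s ^ n, hu.pow n, pow_ne_zero n hu0, ?_⟩
  filter_upwards [hfu] with s hfs
  rw [hfs]
  ring

theorem const_mul (hf : HasVanishingOrder f k) {c : ℂ} (hc : c ≠ 0) :
    HasVanishingOrder (fun s => c * f s) k := by
  obtain ⟨u, hu, hu0, hfu⟩ := hf
  refine ⟨fun s => c * u s, analyticAt_const.mul hu, mul_ne_zero hc hu0, ?_⟩
  filter_upwards [hfu] with s hfs
  rw [hfs]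
  ring

theorem neg (hf : HasVanishingOrder f k) : HasVanishingOrder (fun s => -f s) k :=
  (hf.const_mul (neg_ne_zero.mpr one_ne_zero)).congr (.of_forall fun s => neg_one_mul (f s))

theorem add_of_lt (hf : HasVanishingOrder f k) (hg : HasVanishingOrder g l) (hkl : k < l) :
    HasVanishingOrder (fun s => f s + g s) k := by
  obtain ⟨u, hu, hu0, hfu⟩ := hf
  obtain ⟨v, hv, -, hgv⟩ := hg
  refine ⟨fun s => u s + s ^ (l - k) * v s, hu.add ((analyticAt_id.pow _).mul hv), ?_, ?_⟩
  · simpa [zero_pow (Nat.sub_ne_zero_of_lt hkl)] using hu0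
  · filter_upwards [hfu, hgv] with s hfs hgs
    rw [hfs, hgs, mul_add, ← mul_assoc, ← pow_add, Nat.add_sub_cancel' hkl.le]

theorem add_of_ne (hf : HasVanishingOrder f k) (hg : HasVanishingOrder g l) (hkl : k ≠ l) :
    HasVanishingOrder (fun s => f s + g s) (min k l) := by
  rcases hkl.lt_or_gt with hlt | hgt
  · simpa [hlt.le] using hf.add_of_lt hg hlt
  · simpa [hgt.le, add_comm] using hg.add_of_lt hf hgt

end HasVanishingOrder

section BrianconSpeder

variable {α β : ℕ} {x y z t : ℂ → ℂ} {a b c d e f g : ℕ}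

theorem partial_x_leading_terms_cancel (hα : 2 ≤ α) (hd : 1 ≤ d)
    (hx : HasVanishingOrder x a) (hy : HasVanishingOrder y b) (ht : HasVanishingOrder t d)
    (hFx : HasVanishingOrder (fun s => 3 * x s ^ 2 + t s * y s ^ α) e)
    (hfail : d + (a + α * b) ≤ min a b + e) :
    2 * a = d + α * b ∧ b < a ∧ 2 * a < e := by
  have hαb : 2 * b ≤ α * b := Nat.mul_le_mul_right b hα
  have h2a : 2 * a = d + α * b := by
    by_contra hne
    have := hFx.unique (((hx.pow 2).const_mul three_ne_zero).add_of_ne (ht.mul (hy.pow α)) hne)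
    omega
  omega

theorem min_le_order_y_pow_mul_z
    (hF : ∀ᶠ s in 𝓝 0, x s ^ 3 + t s * x s * y s ^ α + y s ^ β * z s + z s ^ (3 * α) = 0)
    (hx : HasVanishingOrder x a) (hy : HasVanishingOrder y b) (hz : HasVanishingOrder z c)
    (hFx : HasVanishingOrder (fun s => 3 * x s ^ 2 + t s * y s ^ α) e) (he : 2 * a < e) :
    3 * min a (α * c) ≤ β * b + c := by
  by_contra! hlt
  have hαc := Nat.mul_assoc 3 α c
  have hsum := (((hy.pow β).mul hz).add_of_ne (hz.pow (3 * α)) (by omega)).add_of_lt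
    (hx.mul hFx) (by omega)
  have := ((hx.pow 3).const_mul two_ne_zero).unique (hsum.congr ?_)
  · omega
  filter_upwards [hF] with s hs
  linear_combination hs

theorem order_y_pow_mul_z
    (hF : ∀ᶠ s in 𝓝 0, x s ^ 3 + t s * x s * y s ^ α + y s ^ β * z s + z s ^ (3 * α) = 0)
    (hx : HasVanishingOrder x a) (hy : HasVanishingOrder y b) (hz : HasVanishingOrder z c)
    (hFx : HasVanishingOrder (fun s => 3 * x s ^ 2 + t s * y s ^ α) e) (he : 2 * a < e)
    (hne : a ≠ α * c) :
    β * b + c = 3 * min a (α * c) := by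
  have hαc := Nat.mul_assoc 3 α c
  have hsum := (((hx.pow 3).const_mul two_ne_zero).add_of_ne (hz.pow (3 * α)).neg
    (by omega)).add_of_lt (hx.mul hFx).neg (by omega)
  have := ((hy.pow β).mul hz).unique (hsum.congr ?_)
  · omega
  filter_upwards [hF] with s hs
  linear_combination -hs

theorem order_z_mul_partial_z (hα : 1 ≤ α)
    (hF : ∀ᶠ s in 𝓝 0, x s ^ 3 + t s * x s * y s ^ α + y s ^ β * z s + z s ^ (3 * α) = 0)
    (hx : HasVanishingOrder x a) (hz : HasVanishingOrder z c)
    (hFx : HasVanishingOrder (fun s => 3 * x s ^ 2 + t s * y s ^ α) e) (he : 2 * a < e)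
    (hFz : HasVanishingOrder (fun s => y s ^ β + (3 * α : ℂ) * z s ^ (3 * α - 1)) g)
    (hne : a ≠ α * c) :
    c + g = 3 * min a (α * c) := by
  obtain ⟨n, hn⟩ : ∃ n, 3 * α = n + 1 := ⟨3 * α - 1, by omega⟩
  have hcoeff : (n : ℂ) ≠ 0 := Nat.cast_ne_zero.mpr (by omega)
  have hαc := Nat.mul_assoc 3 α c
  have hsum := (((hx.pow 3).const_mul two_ne_zero).add_of_ne ((hz.pow (3 * α)).const_mul hcoeff)
    (by omega)).add_of_lt (hx.mul hFx).neg (by omega)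
  have := (hz.mul hFz).unique (hsum.congr ?_)
  · omega
  have hnC : 3 * (α : ℂ) = n + 1 := by exact_mod_cast hn
  filter_upwards [hF] with s hs
  simp only [hn, Nat.add_sub_cancel] at hs ⊢
  linear_combination -hs - z s ^ (n + 1) * hnC

theorem order_y_mul_partial_y (hα : 2 ≤ α) (hrel : 3 * α = 2 * β + 1)
    (hF : ∀ᶠ s in 𝓝 0, x s ^ 3 + t s * x s * y s ^ α + y s ^ β * z s + z s ^ (3 * α) = 0)
    (hx : HasVanishingOrder x a) (hy : HasVanishingOrder y b) (hz : HasVanishingOrder z c)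
    (hFx : HasVanishingOrder (fun s => 3 * x s ^ 2 + t s * y s ^ α) e) (he : 2 * a < e)
    (hFy : HasVanishingOrder
      (fun s => (α : ℂ) * t s * x s * y s ^ (α - 1) + (β : ℂ) * y s ^ (β - 1) * z s) f)
    (hlt : a < α * c) :
    b + f = 3 * a := by
  have hαc := Nat.mul_assoc 3 α c
  have hβ : -(β : ℂ) ≠ 0 := neg_ne_zero.mpr (Nat.cast_ne_zero.mpr (by omega))
  have hαβ : (α : ℂ) - β ≠ 0 := sub_ne_zero.mpr (Nat.cast_injective.ne (by omega))
  have hsum := (((hx.pow 3).neg.add_of_lt ((hz.pow (3 * α)).const_mul hβ) (by omega)).add_of_lt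
    ((hx.mul hFx).const_mul hαβ) (by omega))
  have := (hy.mul hFy).unique (hsum.congr ?_)
  · omega
  obtain ⟨p, rfl⟩ : ∃ p, α = p + 1 := ⟨α - 1, by omega⟩
  obtain ⟨q, rfl⟩ : ∃ q, β = q + 1 := ⟨β - 1, by omega⟩
  have hrelC : 3 * ((p + 1 : ℕ) : ℂ) = 2 * ((q + 1 : ℕ) : ℂ) + 1 := by exact_mod_cast hrel
  filter_upwards [hF] with s hs
  simp only [Nat.add_sub_cancel]
  linear_combination -((q + 1 : ℕ) : ℂ) * hs + x s ^ 3 * hrelC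

end BrianconSpeder

theorem briancon_speder_family_bpi_failure_valuations_general
    (α β : ℕ) (hα : 3 ≤ α) (hrel : 3 * α = 2 * β + 1)
    (x y z t : ℂ → ℂ)
    (hFγ : ∀ᶠ s in nhds (0 : ℂ),
      (x s) ^ 3 + t s * x s * (y s) ^ α + (y s) ^ β * z s + (z s) ^ (3 * α) = 0)
    (νx νy νz νt νdt νdx νdy νdz : ℕ)
    (hνx : HasVanishingOrder x νx) (hνy : HasVanishingOrder y νy)
    (hνz : HasVanishingOrder z νz) (hνt : HasVanishingOrder t νt)
    (h1t : 1 ≤ νt)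
    (hνdt : HasVanishingOrder (fun s => x s * (y s) ^ α) νdt)
    (hνdx : HasVanishingOrder (fun s => 3 * (x s) ^ 2 + t s * (y s) ^ α) νdx)
    (hνdy : HasVanishingOrder
      (fun s => (α : ℂ) * t s * x s * (y s) ^ (α - 1)
        + (β : ℂ) * (y s) ^ (β - 1) * z s) νdy)
    (hνdz : HasVanishingOrder
      (fun s => (y s) ^ β + (3 * α : ℂ) * (z s) ^ (3 * α - 1)) νdz)
    (hfail : νt + νdt ≤ min νx (min νy νz) + min νdx (min νdy νdz)) :
    νx > νy ∧ νy = νz ∧ νz > νt ∧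
    νx + νt = νz + (β - α) * νy ∧ 2 * νx = νt + α * νy ∧
    3 * νx = (β + 1) * νy ∧ 3 * νt = νy := by
  have hdt : νdt = νx + α * νy := hνdt.unique (hνx.mul (hνy.pow α))
  obtain ⟨h2x, hyx, hdx⟩ :=
    partial_x_leading_terms_cancel (by omega) h1t hνx hνy hνt hνdx (by omega)
  have hne : νx ≠ α * νz := by
    intro h
    have hy2z : νy < 2 * νz := Nat.lt_of_mul_lt_mul_left (a := α) (by linarith)
    have hmin := min_le_order_y_pow_mul_z hFγ hνx hνy hνz hνdx hdx
    rw [← h, min_self] at hmin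
    nlinarith
  have hzFz := order_z_mul_partial_z (by omega) hFγ hνx hνz hνdx hdx hνdz hne
  have hyz := order_y_pow_mul_z hFγ hνx hνy hνz hνdx hdx hne
  obtain ⟨hxz, hzy⟩ : νx < α * νz ∧ νz ≤ νy := by omega
  have hyFy := order_y_mul_partial_y (by omega) hrel hFγ hνx hνy hνz hνdx hdx hνdy hxz
  have hαβ : 3 * (α * νy) = 2 * (β * νy) + νy := by rw [← Nat.mul_assoc, hrel]; ring
  rw [Nat.sub_mul, add_mul, one_mul]
  omega

/-- For `F(x,y,z,t) = x³ + txy^α + y^β z + z^{3α}` with `3α = 2β + 1`, let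
`γ = (x,y,z,t)` be an analytic arc in `F⁻¹(0)` through `0` along which `(b^π)`
fails, i.e. `ν(t) + ν(xy^α) ≤ min(ν(x),ν(y),ν(z)) + ν(J_X F∘γ)`.  Then
`ν(x) > ν(y) = ν(z) > ν(t)`, `ν(x) + ν(t) = ν(z) + (β-α)ν(y)` and
`2ν(x) = ν(t) + αν(y)`; hence with `m = ν(y)`, `3ν(x) = (β+1)m` and `3ν(t) = m`. -/
theorem briancon_speder_family_bpi_failure_valuations
    (α β : ℕ) (hα : 3 ≤ α) (hβ : 0 < β) (hrel : 3 * α = 2 * β + 1)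
    (x y z t : ℂ → ℂ)
    (hxa : AnalyticAt ℂ x 0) (hya : AnalyticAt ℂ y 0)
    (hza : AnalyticAt ℂ z 0) (hta : AnalyticAt ℂ t 0)
    (hFγ : ∀ᶠ s in nhds (0 : ℂ),
      (x s) ^ 3 + t s * x s * (y s) ^ α + (y s) ^ β * z s + (z s) ^ (3 * α) = 0)
    (νx νy νz νt νdt νdx νdy νdz : ℕ)
    (hνx : HasVanishingOrder x νx) (hνy : HasVanishingOrder y νy)
    (hνz : HasVanishingOrder z νz) (hνt : HasVanishingOrder t νt)
    (h1x : 1 ≤ νx) (h1y : 1 ≤ νy) (h1z : 1 ≤ νz) (h1t : 1 ≤ νt)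
    (hνdt : HasVanishingOrder (fun s => x s * (y s) ^ α) νdt)
    (hνdx : HasVanishingOrder (fun s => 3 * (x s) ^ 2 + t s * (y s) ^ α) νdx)
    (hνdy : HasVanishingOrder
      (fun s => (α : ℂ) * t s * x s * (y s) ^ (α - 1)
        + (β : ℂ) * (y s) ^ (β - 1) * z s) νdy)
    (hνdz : HasVanishingOrder
      (fun s => (y s) ^ β + (3 * α : ℂ) * (z s) ^ (3 * α - 1)) νdz)
    (hfail : νt + νdt ≤ min νx (min νy νz) + min νdx (min νdy νdz)) :
    νx > νy ∧ νy = νz ∧ νz > νt ∧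
    νx + νt = νz + (β - α) * νy ∧ 2 * νx = νt + α * νy ∧
    3 * νx = (β + 1) * νy ∧ 3 * νt = νy :=
  briancon_speder_family_bpi_failure_valuations_general α β hα hrel x y z t hFγ νx νy νz νt νdt νdx
    νdy νdz hνx hνy hνz hνt h1t hνdt hνdx hνdy hνdz hfail
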